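/- arXiv:math/0402092 — 4 statements merged into one kernel-verified Lean document; each statement's English description precedes it below -/
import Mathlib

section
/- For real q with 0 < q < 1, the infinite series ∑_{k=1}^∞ (-1)^{k+1} q^{k(k+1)/2} / ((1-q)(1-q^2)⋯(1-q^{k-1})(1-q^k)^2) equals ∑_{k=1}^∞ q^k/(1-q^k). -/
/-!
Both sides are iterated sums of the absolutely convergent double series
`F(k, r) = q^(k+1) (-1)^r q^(r(r+1)/2) [k, r]_q / (1 - q^(r+1))` for `r ≤ k` (and `0` otherwise).

Both inner sums come from the telescoping series `∑_t q^t ∏_{i<j} (1 - q^(t+i+1)) = 1/(1 - q^(j+1))`.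
Expanding its product by Gauss' q-binomial theorem and summing the resulting geometric series gives
`∑_{r ≤ k} (-1)^r q^(r(r+1)/2) [k, r]_q / (1 - q^(r+1)) = 1/(1 - q^(k+1))`, so the `k`-th column of `F`
sums to `q^(k+1)/(1 - q^(k+1))`. Read as `∑_m q^m [m+r, r]_q = 1/((1 - q^(r+1)) (q;q)_r)`, the same
series sums the `r`-th row of `F` to the `r`-th term on the left.
-/

open Finset Filter Topology

lemma triangle_succ (r : ℕ) : (r + 1) * (r + 2) / 2 = r * (r + 1) / 2 + (r + 1) := by
  have h : 2 ∣ r * (r + 1) := (Nat.even_mul_succ_self r).two_dvd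
  have : (r + 1) * (r + 2) = r * (r + 1) + 2 * (r + 1) := by ring
  omega

section QAnalogues

variable {K : Type*} [Field K] (q : K)

/-- The q-Pochhammer symbol `(q; q)_n = (1 - q) ⋯ (1 - q^n)`. -/
def qPoch (n : ℕ) : K := ∏ i ∈ range n, (1 - q ^ (i + 1))

def qBinom (n r : ℕ) : K := qPoch q n / (qPoch q r * qPoch q (n - r))

def signedQBinom (n r : ℕ) : K := (-1) ^ r * q ^ (r * (r + 1) / 2) * qBinom q n r

@[simp]
lemma qPoch_zero : qPoch q 0 = 1 := prod_range_zero _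

lemma qPoch_succ (n : ℕ) : qPoch q (n + 1) = qPoch q n * (1 - q ^ (n + 1)) :=
  prod_range_succ _ n

lemma qPoch_add (m r : ℕ) :
    qPoch q (m + r) = qPoch q m * ∏ i ∈ range r, (1 - q ^ m * q ^ (i + 1)) := by
  simp only [qPoch, prod_range_add, ← pow_add, add_assoc]

lemma prod_Icc_one_sub_pow (n : ℕ) : ∏ j ∈ Icc 1 n, (1 - q ^ j) = qPoch q n := by
  induction n with
  | zero => simp
  | succ n ih => rw [prod_Icc_succ_top (by omega), ih, qPoch_succ]

lemma one_sub_mul_prod_succ (x : K) (n : ℕ) :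
    (1 - x * q) * ∏ i ∈ range n, (1 - x * q * q ^ (i + 1))
      = (1 - x * q ^ (n + 1)) * ∏ i ∈ range n, (1 - x * q ^ (i + 1)) := by
  calc _ = ∏ i ∈ range (n + 1), (1 - x * q ^ (i + 1)) := by
        rw [prod_range_succ']
        simp only [mul_assoc, ← pow_succ']
        ring
    _ = _ := by rw [prod_range_succ, mul_comm]

variable {q} (hq : ∀ n : ℕ, q ^ (n + 1) ≠ 1)
include hq

lemma qPoch_ne_zero (n : ℕ) : qPoch q n ≠ 0 :=
  prod_ne_zero_iff.2 fun i _ => sub_ne_zero.2 (hq i).symm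

lemma qBinom_zero_right (n : ℕ) : qBinom q n 0 = 1 := by
  simp [qBinom, qPoch_ne_zero hq]

lemma qBinom_self (n : ℕ) : qBinom q n n = 1 := by
  simp [qBinom, qPoch_ne_zero hq]

lemma qBinom_succ_succ {n r : ℕ} (h : r < n) :
    qBinom q (n + 1) (r + 1) = qBinom q n (r + 1) + q ^ (n - r) * qBinom q n r := by
  obtain ⟨d, rfl⟩ : ∃ d, n = r + d + 1 := ⟨n - r - 1, by omega⟩
  have hsub₁ : r + d + 1 + 1 - (r + 1) = d + 1 := by omega
  have hsub₂ : r + d + 1 - (r + 1) = d := by omega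
  have hsub₃ : r + d + 1 - r = d + 1 := by omega
  have hr := qPoch_ne_zero hq r
  have hd := qPoch_ne_zero hq d
  have hr' := sub_ne_zero.2 (hq r).symm
  have hd' := sub_ne_zero.2 (hq d).symm
  rw [qBinom, qBinom, qBinom, hsub₁, hsub₂, hsub₃, qPoch_succ _ (r + d + 1), qPoch_succ _ r,
    qPoch_succ _ d]
  field_simp
  ring

lemma signedQBinom_zero_right (n : ℕ) : signedQBinom q n 0 = 1 := by
  simp [signedQBinom, qBinom_zero_right hq]

lemma signedQBinom_succ_succ {n r : ℕ} (h : r < n) :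
    signedQBinom q (n + 1) (r + 1) = signedQBinom q n (r + 1) - q ^ (n + 1) * signedQBinom q n r := by
  have hexp : (r + 1) * (r + 1 + 1) / 2 + (n - r) = n + 1 + r * (r + 1) / 2 := by
    have := triangle_succ r
    have : (r + 1) * (r + 1 + 1) = (r + 1) * (r + 2) := rfl
    omega
  rw [signedQBinom, signedQBinom, signedQBinom, qBinom_succ_succ hq h]
  linear_combination (-(-1 : K) ^ r * qBinom q n r) * congrArg (q ^ ·) hexp

lemma signedQBinom_succ_self (n : ℕ) :
    signedQBinom q (n + 1) (n + 1) = -(q ^ (n + 1) * signedQBinom q n n) := by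
  have hexp : (n + 1) * (n + 1 + 1) / 2 = n + 1 + n * (n + 1) / 2 := by
    have := triangle_succ n
    have : (n + 1) * (n + 1 + 1) = (n + 1) * (n + 2) := rfl
    omega
  rw [signedQBinom, signedQBinom, qBinom_self hq, qBinom_self hq, hexp, pow_add, pow_succ]
  ring

theorem prod_one_sub_mul_pow_eq_sum (n : ℕ) (x : K) :
    ∏ i ∈ range n, (1 - x * q ^ (i + 1)) = ∑ r ∈ range (n + 1), signedQBinom q n r * x ^ r := by
  induction n with
  | zero => simp [signedQBinom_zero_right hq]
  | succ n ih =>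
    have hmid : ∀ r ∈ range n, signedQBinom q (n + 1) (r + 1) * x ^ (r + 1)
        = signedQBinom q n (r + 1) * x ^ (r + 1) - q ^ (n + 1) * signedQBinom q n r * x ^ (r + 1) :=
      fun r hr => by rw [signedQBinom_succ_succ hq (mem_range.1 hr)]; ring
    have hsplit : (∑ r ∈ range (n + 1), signedQBinom q n r * x ^ r) * (1 - x * q ^ (n + 1))
        = ∑ r ∈ range (n + 1), signedQBinom q n r * x ^ r
          - ∑ r ∈ range (n + 1), q ^ (n + 1) * signedQBinom q n r * x ^ (r + 1) := by
      rw [mul_sub, mul_one, sum_mul]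
      exact congrArg _ (sum_congr rfl fun r _ => by ring)
    rw [prod_range_succ, ih, hsplit, sum_range_succ' _ (n + 1),
      sum_range_succ (fun r => signedQBinom q (n + 1) (r + 1) * x ^ (r + 1)),
      sum_congr rfl hmid, sum_sub_distrib, signedQBinom_succ_self hq,
      sum_range_succ' (fun r => signedQBinom q n r * x ^ r),
      sum_range_succ (fun r => q ^ (n + 1) * signedQBinom q n r * x ^ (r + 1)),
      signedQBinom_zero_right hq, signedQBinom_zero_right hq]
    ring

end QAnalogues

noncomputable def uchimuraTerm (q : ℝ) (k r : ℕ) : ℝ :=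
  if r ≤ k then q ^ (k + 1) * signedQBinom q k r / (1 - q ^ (r + 1)) else 0

lemma uchimuraTerm_of_le {q : ℝ} {k r : ℕ} (h : r ≤ k) :
    uchimuraTerm q k r = q ^ (k + 1) * signedQBinom q k r / (1 - q ^ (r + 1)) := if_pos h

lemma uchimuraTerm_of_lt {q : ℝ} {k r : ℕ} (h : k < r) : uchimuraTerm q k r = 0 :=
  if_neg (Nat.not_le.2 h)

section UnitInterval

variable {q : ℝ} (hq0 : 0 < q) (hq1 : q < 1)
include hq0 hq1

lemma pow_succ_lt_one (n : ℕ) : q ^ (n + 1) < 1 :=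
  pow_lt_one₀ hq0.le hq1 n.succ_ne_zero

lemma one_sub_pow_succ_pos (n : ℕ) : 0 < 1 - q ^ (n + 1) :=
  sub_pos.2 (pow_succ_lt_one hq0 hq1 n)

lemma qPoch_pos (n : ℕ) : 0 < qPoch q n :=
  prod_pos fun i _ => one_sub_pow_succ_pos hq0 hq1 i

lemma qPoch_antitone : Antitone (qPoch q) :=
  antitone_nat_of_succ_le fun n => by
    rw [qPoch_succ]
    exact mul_le_of_le_one_right (qPoch_pos hq0 hq1 n).le (by linarith [pow_pos hq0 (n + 1)])

lemma qBinom_pos (n r : ℕ) : 0 < qBinom q n r :=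
  div_pos (qPoch_pos hq0 hq1 n) (mul_pos (qPoch_pos hq0 hq1 r) (qPoch_pos hq0 hq1 _))

lemma qBinom_le_inv_qPoch (n r : ℕ) : qBinom q n r ≤ (qPoch q r)⁻¹ := by
  rw [qBinom, mul_comm, ← div_div, div_eq_mul_inv _ (qPoch q r)]
  exact mul_le_of_le_one_left (inv_nonneg.2 (qPoch_pos hq0 hq1 r).le)
    (div_le_one_of_le₀ (qPoch_antitone hq0 hq1 (Nat.sub_le n r)) (qPoch_pos hq0 hq1 _).le)

lemma hasSum_pow_mul_prod_one_sub (j : ℕ) :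
    HasSum (fun t : ℕ => q ^ t * ∏ i ∈ range j, (1 - q ^ t * q ^ (i + 1))) (1 - q ^ (j + 1))⁻¹ := by
  set P : ℕ → ℝ := fun t => ∏ i ∈ range j, (1 - q ^ t * q ^ (i + 1))
  set c : ℕ → ℝ := fun t => (1 - q ^ t) * P t / (1 - q ^ (j + 1))
  have hstep (t : ℕ) : c (t + 1) - c t = q ^ t * P t := by
    have h : (1 - q ^ (t + 1)) * P (t + 1) = (1 - q ^ t * q ^ (j + 1)) * P t := by
      simpa only [← pow_succ] using one_sub_mul_prod_succ q (q ^ t) j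
    simp only [c]
    rw [h]
    field_simp [(one_sub_pow_succ_pos hq0 hq1 j).ne']
    ring
  have hpow : Tendsto (fun t : ℕ => q ^ t) atTop (𝓝 0) :=
    tendsto_pow_atTop_nhds_zero_of_lt_one hq0.le hq1
  have hP : Tendsto P atTop (𝓝 1) := by
    simpa using tendsto_finsetProd (range j)
      fun i _ => (tendsto_const_nhds (x := (1 : ℝ))).sub (hpow.mul_const (q ^ (i + 1)))
  have hc : Tendsto c atTop (𝓝 (1 - q ^ (j + 1))⁻¹) := by
    simpa [c] using (((tendsto_const_nhds (x := (1 : ℝ))).sub hpow).mul hP).div_const (1 - q ^ (j + 1))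
  have hnonneg (t : ℕ) : 0 ≤ q ^ t * P t :=
    mul_nonneg (pow_nonneg hq0.le t) (prod_nonneg fun i _ => sub_nonneg.2
      (by rw [← pow_add]; exact pow_le_one₀ hq0.le hq1.le))
  rw [hasSum_iff_tendsto_nat_of_nonneg hnonneg]
  convert hc using 2 with N
  rw [← sum_congr rfl fun t _ => hstep t, sum_range_sub]
  simp [c]

lemma sum_signedQBinom_div_one_sub_pow (j : ℕ) :
    ∑ r ∈ range (j + 1), signedQBinom q j r / (1 - q ^ (r + 1)) = (1 - q ^ (j + 1))⁻¹ := by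
  have hq (n : ℕ) : q ^ (n + 1) ≠ 1 := (pow_succ_lt_one hq0 hq1 n).ne
  have hgeom := hasSum_sum fun r (_ : r ∈ range (j + 1)) =>
    (hasSum_geometric_of_lt_one (pow_nonneg hq0.le (r + 1))
      (pow_succ_lt_one hq0 hq1 r)).mul_left (signedQBinom q j r)
  have hexpand : (fun t : ℕ => q ^ t * ∏ i ∈ range j, (1 - q ^ t * q ^ (i + 1)))
      = fun t => ∑ r ∈ range (j + 1), signedQBinom q j r * (q ^ (r + 1)) ^ t := by
    funext t
    rw [prod_one_sub_mul_pow_eq_sum hq, mul_sum]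
    refine sum_congr rfl fun r _ => ?_
    rw [← pow_mul, ← pow_mul, add_one_mul, pow_add, mul_comm r]
    ring
  have h := hasSum_pow_mul_prod_one_sub hq0 hq1 j
  rw [hexpand] at h
  simp only [h.unique hgeom, div_eq_mul_inv]

lemma hasSum_pow_mul_qBinom_add_right (r : ℕ) :
    HasSum (fun m : ℕ => q ^ m * qBinom q (m + r) r) ((1 - q ^ (r + 1)) * qPoch q r)⁻¹ := by
  have hterm : (fun m : ℕ => q ^ m * qBinom q (m + r) r)
      = fun m => q ^ m * (∏ i ∈ range r, (1 - q ^ m * q ^ (i + 1))) / qPoch q r := by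
    funext m
    rw [qBinom, Nat.add_sub_cancel, qPoch_add]
    field_simp [(qPoch_pos hq0 hq1 m).ne', (qPoch_pos hq0 hq1 r).ne']
  rw [hterm, mul_inv, ← div_eq_mul_inv]
  exact (hasSum_pow_mul_prod_one_sub hq0 hq1 r).div_const (qPoch q r)

lemma summable_pow_triangle_div_qPoch :
    Summable fun r : ℕ => q ^ (r * (r + 1) / 2) / qPoch q r := by
  have hpos (n : ℕ) : 0 < q ^ (n * (n + 1) / 2) / qPoch q n :=
    div_pos (pow_pos hq0 _) (qPoch_pos hq0 hq1 n)
  refine summable_of_ratio_test_tendsto_lt_one zero_lt_one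
    (Eventually.of_forall fun n => (hpos n).ne') ?_
  have hratio (n : ℕ) : ‖q ^ ((n + 1) * (n + 1 + 1) / 2) / qPoch q (n + 1)‖
      / ‖q ^ (n * (n + 1) / 2) / qPoch q n‖ = q ^ (n + 1) / (1 - q ^ (n + 1)) := by
    have : (n + 1) * (n + 1 + 1) = (n + 1) * (n + 2) := rfl
    rw [Real.norm_of_nonneg (hpos _).le, Real.norm_of_nonneg (hpos _).le, this, triangle_succ,
      qPoch_succ, pow_add]
    field_simp [(qPoch_pos hq0 hq1 n).ne', (one_sub_pow_succ_pos hq0 hq1 n).ne',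
      (pow_pos hq0 (n * (n + 1) / 2)).ne']
  have hpow : Tendsto (fun n : ℕ => q ^ (n + 1)) atTop (𝓝 0) :=
    (tendsto_pow_atTop_nhds_zero_of_lt_one hq0.le hq1).comp (tendsto_add_atTop_nat 1)
  simp only [hratio]
  simpa [Pi.div_def] using hpow.div ((tendsto_const_nhds (x := (1 : ℝ))).sub hpow) (by norm_num)

lemma abs_signedQBinom (n r : ℕ) : |signedQBinom q n r| = q ^ (r * (r + 1) / 2) * qBinom q n r := by
  rw [signedQBinom, abs_mul, abs_mul, abs_pow, abs_neg, abs_one, one_pow, one_mul,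
    abs_of_pos (pow_pos hq0 _), abs_of_pos (qBinom_pos hq0 hq1 n r)]

lemma summable_uchimuraTerm : Summable (Function.uncurry (uchimuraTerm q)) := by
  have hnonneg (r : ℕ) : 0 ≤ q ^ (r * (r + 1) / 2) / qPoch q r / (1 - q) :=
    div_nonneg (div_nonneg (pow_nonneg hq0.le _) (qPoch_pos hq0 hq1 r).le) (sub_pos.2 hq1).le
  refine Summable.of_norm_bounded ((summable_geometric_of_lt_one hq0.le hq1).mul_of_nonneg
    ((summable_pow_triangle_div_qPoch hq0 hq1).div_const (1 - q)) (fun k => pow_nonneg hq0.le k)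
    hnonneg) ?_
  rintro ⟨k, r⟩
  simp only [Function.uncurry_apply_pair, uchimuraTerm]
  split_ifs
  · rw [Real.norm_eq_abs, abs_div, abs_mul, abs_signedQBinom hq0 hq1,
      abs_of_pos (pow_pos hq0 _), abs_of_pos (one_sub_pow_succ_pos hq0 hq1 r)]
    have hbinom := qBinom_le_inv_qPoch hq0 hq1 k r
    have hnum : q ^ (k + 1) ≤ q ^ k := pow_le_pow_of_le_one hq0.le hq1.le (Nat.le_succ k)
    have hden : 1 - q ≤ 1 - q ^ (r + 1) := by
      linarith [pow_le_pow_of_le_one hq0.le hq1.le (Nat.le_add_left 1 r), pow_one q]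
    have h1q : 0 < 1 - q := sub_pos.2 hq1
    calc q ^ (k + 1) * (q ^ (r * (r + 1) / 2) * qBinom q k r) / (1 - q ^ (r + 1))
        ≤ q ^ k * (q ^ (r * (r + 1) / 2) * (qPoch q r)⁻¹) / (1 - q) := by
          gcongr (?_ * (_ * ?_)) / ?_
          · exact mul_nonneg (pow_nonneg hq0.le _)
              (mul_nonneg (pow_nonneg hq0.le _) (inv_nonneg.2 (qPoch_pos hq0 hq1 r).le))
          · exact mul_nonneg (pow_nonneg hq0.le _) (qBinom_pos hq0 hq1 k r).le
      _ = _ := by ring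
  · rw [norm_zero]
    exact mul_nonneg (pow_nonneg hq0.le k) (hnonneg r)

lemma tsum_uchimuraTerm_right (k : ℕ) :
    ∑' r, uchimuraTerm q k r = q ^ (k + 1) / (1 - q ^ (k + 1)) := by
  rw [tsum_eq_sum (s := range (k + 1)) fun r hr => uchimuraTerm_of_lt (by simpa using hr),
    sum_congr rfl fun r hr => uchimuraTerm_of_le (Nat.lt_succ_iff.1 (mem_range.1 hr))]
  simp only [mul_div_assoc]
  rw [← mul_sum, sum_signedQBinom_div_one_sub_pow hq0 hq1, div_eq_mul_inv]

lemma tsum_uchimuraTerm_left (r : ℕ) :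
    ∑' k, uchimuraTerm q k r
      = (-1) ^ r * q ^ ((r + 1) * (r + 2) / 2) / (qPoch q r * (1 - q ^ (r + 1)) ^ 2) := by
  have hshift (m : ℕ) : uchimuraTerm q (m + r) r
      = (-1) ^ r * q ^ (r * (r + 1) / 2) * q ^ (r + 1) / (1 - q ^ (r + 1))
        * (q ^ m * qBinom q (m + r) r) := by
    rw [uchimuraTerm_of_le (Nat.le_add_left r m), signedQBinom]
    ring
  have h := (hasSum_pow_mul_qBinom_add_right hq0 hq1 r).mul_left
    ((-1) ^ r * q ^ (r * (r + 1) / 2) * q ^ (r + 1) / (1 - q ^ (r + 1)))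
  simp only [← hshift] at h
  rw [hasSum_nat_add_iff (f := fun k => uchimuraTerm q k r),
    sum_eq_zero fun k hk => uchimuraTerm_of_lt (mem_range.1 hk), add_zero] at h
  rw [h.tsum_eq, triangle_succ, pow_add q (r * (r + 1) / 2)]
  field_simp [(qPoch_pos hq0 hq1 r).ne', (one_sub_pow_succ_pos hq0 hq1 r).ne']

end UnitInterval

theorem uchimura (q : ℝ) (hq0 : 0 < q) (hq1 : q < 1) :
    ∑' k : ℕ, (-1 : ℝ) ^ (k + 1 + 1) * q ^ ((k + 1) * (k + 2) / 2) /
      ((∏ j ∈ Finset.Icc 1 k, (1 - q ^ j)) * (1 - q ^ (k + 1)) ^ 2)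
    = ∑' k : ℕ, q ^ (k + 1) / (1 - q ^ (k + 1)) := by
  calc _ = ∑' (r : ℕ) (k : ℕ), uchimuraTerm q k r :=
        tsum_congr fun r => by
          rw [tsum_uchimuraTerm_left hq0 hq1, prod_Icc_one_sub_pow, pow_add _ _ 2, neg_one_sq,
            mul_one]
    _ = ∑' (k : ℕ) (r : ℕ), uchimuraTerm q k r := (summable_uchimuraTerm hq0 hq1).tsum_comm
    _ = _ := tsum_congr (tsum_uchimuraTerm_right hq0 hq1)
end

section
/- For every positive integer n and real q with 0 < q < 1, ∑_{k=1}^n (-1)^{k+1} q^{k(k+1)/2} / (1-q^k) · C_q(n,k) = ∑_{k=1}^n q^k/(1-q^k), where C_q(n,k) denotes the Gaussian binomial coefficient. -/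
/-!
Induct on `n`. The absorption identity `(1 - q^(n+1-k)) C(n+1,k) = (1 - q^(n+1)) C(n,k)` gives
`C(n+1,k) - C(n,k) = q^(n+1-k) (1 - q^k) / (1 - q^(n+1)) C(n+1,k)`, so the factor `1 - q^k`
cancels and the left side grows by `q^(n+1) / (1 - q^(n+1))` times
`∑_{k ≥ 1} (-1)^(k+1) q^(k choose 2) C(n+1,k)`. That sum is `1`, because
`∑_k (-1)^k q^(k choose 2) C(m,k) = ∏_{j<m} (1 - q^j)` vanishes for `m ≥ 1`; by q-Pascal the
terms of this sum telescope.
-/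

/-- Gaussian binomial coefficient, vanishing unless `k ≤ n`. -/
noncomputable def qbinom (q : ℝ) (n k : ℕ) : ℝ :=
  if k ≤ n then ∏ j ∈ Finset.Icc 1 k, (1 - q ^ (n - k + j)) / (1 - q ^ j) else 0

open Finset

theorem mul_prod_Icc_succ_eq_prod_Icc_mul {M : Type*} [CommMonoid M] (g : ℕ → M) (k : ℕ) :
    g 1 * ∏ j ∈ Icc 1 k, g (j + 1) = (∏ j ∈ Icc 1 k, g j) * g (k + 1) := by
  induction k with
  | zero => simp
  | succ k ih =>
    rw [prod_Icc_succ_top (by omega), prod_Icc_succ_top (by omega), ← mul_assoc, ih]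

theorem qbinom_of_lt {q : ℝ} {n k : ℕ} (h : n < k) : qbinom q n k = 0 := by
  simp [qbinom, h.not_ge]

theorem qbinom_zero_right (q : ℝ) (n : ℕ) : qbinom q n 0 = 1 := by
  simp [qbinom]

theorem qbinom_succ_succ (q : ℝ) (n k : ℕ) :
    qbinom q (n + 1) (k + 1) = qbinom q n k * (1 - q ^ (n + 1)) / (1 - q ^ (k + 1)) := by
  by_cases hk : k ≤ n
  · rw [qbinom, qbinom, if_pos (by omega), if_pos hk, prod_Icc_succ_top (by omega),
      Nat.add_sub_add_right, show n - k + (k + 1) = n + 1 by omega]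
    ring
  · rw [qbinom_of_lt (by omega), qbinom_of_lt (by omega), zero_mul, zero_div]

theorem one_sub_pow_mul_qbinom_succ_left (q : ℝ) (n k : ℕ) :
    (1 - q ^ (n + 1 - k)) * qbinom q (n + 1) k = (1 - q ^ (n + 1)) * qbinom q n k := by
  rcases lt_trichotomy k (n + 1) with hk | rfl | hk
  · -- the numerator of `C(n+1,k)` is that of `C(n,k)` with every index shifted by one
    have key := mul_prod_Icc_succ_eq_prod_Icc_mul (fun j => 1 - q ^ (n - k + j)) k
    rw [qbinom, qbinom, if_pos hk.le, if_pos (by omega), prod_div_distrib, prod_div_distrib,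
      mul_div_assoc', mul_div_assoc', show n + 1 - k = n - k + 1 by omega]
    simp_rw [add_assoc, add_comm 1, key, show n - k + (k + 1) = n + 1 by omega, mul_comm]
  · rw [Nat.sub_self, pow_zero, sub_self, zero_mul, qbinom_of_lt (Nat.lt_succ_self n), mul_zero]
  · rw [qbinom_of_lt hk, qbinom_of_lt (by omega), mul_zero, mul_zero]

theorem qbinom_succ_succ_eq_add {q : ℝ} {m k : ℕ} (hk : q ^ (k + 1) ≠ 1) (hm : q ^ (m + 1) ≠ 1) :
    qbinom q (m + 1) (k + 1) = qbinom q m k + q ^ (k + 1) * qbinom q m (k + 1) := by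
  by_cases hkm : k ≤ m
  · have absorb := one_sub_pow_mul_qbinom_succ_left q m (k + 1)
    rw [Nat.add_sub_add_right] at absorb
    have diag : (1 - q ^ (k + 1)) * qbinom q (m + 1) (k + 1)
        = (1 - q ^ (m + 1)) * qbinom q m k := by
      have : 1 - q ^ (k + 1) ≠ 0 := sub_ne_zero.2 hk.symm
      rw [qbinom_succ_succ]
      field_simp
    have hpow : q ^ (m + 1) = q ^ (k + 1) * q ^ (m - k) := by rw [← pow_add]; congr 1; omega
    apply mul_left_cancel₀ (sub_ne_zero.2 hm.symm)
    rw [hpow] at absorb diag ⊢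
    linear_combination diag + q ^ (k + 1) * absorb
  · rw [qbinom_of_lt (by omega), qbinom_of_lt (by omega), qbinom_of_lt (by omega)]
    ring

theorem qbinom_succ_sub_qbinom {q : ℝ} {n k : ℕ} (hn : q ^ (n + 1) ≠ 1) (hk : k ≤ n + 1) :
    qbinom q (n + 1) k - qbinom q n k
      = q ^ (n + 1 - k) * (1 - q ^ k) / (1 - q ^ (n + 1)) * qbinom q (n + 1) k := by
  have absorb := one_sub_pow_mul_qbinom_succ_left q n k
  have : 1 - q ^ (n + 1) ≠ 0 := sub_ne_zero.2 hn.symm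
  have hpow : q ^ (n + 1) = q ^ k * q ^ (n + 1 - k) := by rw [← pow_add]; congr 1; omega
  field_simp
  rw [hpow] at absorb ⊢
  linear_combination absorb

theorem sum_range_neg_one_pow_mul_qbinom {q : ℝ} {m : ℕ} (hq : ∀ j ∈ Icc 1 (m + 1), q ^ j ≠ 1) :
    ∑ k ∈ range (m + 2), (-1) ^ k * q ^ k.choose 2 * qbinom q (m + 1) k = 0 := by
  set a : ℕ → ℝ := fun j => (-1) ^ j * q ^ (j + 1).choose 2 * qbinom q m j
  have telescope : ∀ k ∈ range (m + 1),
      (-1) ^ (k + 1) * q ^ (k + 1).choose 2 * qbinom q (m + 1) (k + 1) = a (k + 1) - a k := by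
    intro k hk
    rw [mem_range] at hk
    rw [qbinom_succ_succ_eq_add (hq _ (by simp; omega)) (hq _ (by simp))]
    simp only [a]
    rw [Nat.choose_succ_succ' (k + 1) 1, Nat.choose_one_right]
    ring
  rw [sum_range_succ', sum_congr rfl telescope, sum_range_sub]
  simp [a, qbinom_of_lt, qbinom_zero_right]

theorem sum_Icc_neg_one_pow_succ_mul_qbinom {q : ℝ} {m : ℕ}
    (hq : ∀ j ∈ Icc 1 (m + 1), q ^ j ≠ 1) :
    ∑ k ∈ Icc 1 (m + 1), (-1) ^ (k + 1) * q ^ k.choose 2 * qbinom q (m + 1) k = 1 := by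
  have h := sum_range_neg_one_pow_mul_qbinom hq
  rw [range_eq_Ico, sum_eq_sum_Ico_succ_bot (by omega), zero_add,
    show Ico 1 (m + 2) = Icc 1 (m + 1) from Ico_add_one_right_eq_Icc 1 (m + 1)] at h
  simp only [pow_succ, mul_neg_one, neg_mul, sum_neg_distrib]
  simp only [pow_zero, Nat.choose_zero_succ, one_mul, qbinom_zero_right] at h
  linarith

theorem sum_Icc_qbinom_succ_sub {q : ℝ} {n : ℕ} (hq : ∀ j ∈ Icc 1 (n + 1), q ^ j ≠ 1) :
    ∑ k ∈ Icc 1 (n + 1), (-1 : ℝ) ^ (k + 1) * q ^ (k * (k + 1) / 2) / (1 - q ^ k)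
        * qbinom q (n + 1) k
      - ∑ k ∈ Icc 1 n, (-1 : ℝ) ^ (k + 1) * q ^ (k * (k + 1) / 2) / (1 - q ^ k) * qbinom q n k
      = q ^ (n + 1) / (1 - q ^ (n + 1)) := by
  have extend : ∑ k ∈ Icc 1 n, (-1 : ℝ) ^ (k + 1) * q ^ (k * (k + 1) / 2) / (1 - q ^ k)
        * qbinom q n k
      = ∑ k ∈ Icc 1 (n + 1), (-1 : ℝ) ^ (k + 1) * q ^ (k * (k + 1) / 2) / (1 - q ^ k)
        * qbinom q n k := by
    rw [sum_Icc_succ_top (by omega), qbinom_of_lt (by omega), mul_zero, add_zero]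
  have hterm : ∀ k ∈ Icc 1 (n + 1),
      (-1 : ℝ) ^ (k + 1) * q ^ (k * (k + 1) / 2) / (1 - q ^ k) * qbinom q (n + 1) k
        - (-1 : ℝ) ^ (k + 1) * q ^ (k * (k + 1) / 2) / (1 - q ^ k) * qbinom q n k
      = q ^ (n + 1) / (1 - q ^ (n + 1))
        * ((-1) ^ (k + 1) * q ^ k.choose 2 * qbinom q (n + 1) k) := by
    intro k hk
    have hk' : 1 - q ^ k ≠ 0 := sub_ne_zero.2 (hq k hk).symm
    have hn' : 1 - q ^ (n + 1) ≠ 0 := sub_ne_zero.2 (hq _ (by simp)).symm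
    have hexp : k * (k + 1) / 2 = k.choose 2 + k := by
      have h := Nat.choose_succ_succ' k 1
      rw [Nat.choose_two_right (k + 1), Nat.add_sub_cancel, Nat.choose_one_right] at h
      rw [mul_comm, h, add_comm]
    have hpow : q ^ (n + 1) = q ^ k * q ^ (n + 1 - k) := by
      rw [← pow_add]; congr 1; simp at hk; omega
    rw [← mul_sub, qbinom_succ_sub_qbinom (hq _ (by simp)) (mem_Icc.1 hk).2, hexp,
      pow_add q (k.choose 2) k, hpow]
    field_simp
  rw [extend, ← sum_sub_distrib, sum_congr rfl hterm, ← mul_sum,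
    sum_Icc_neg_one_pow_succ_mul_qbinom hq, mul_one]

theorem andrews_uchimura_general (n : ℕ) (q : ℝ) (hq0 : 0 < q) (hq1 : q < 1) :
    ∑ k ∈ Finset.Icc 1 n, (-1 : ℝ) ^ (k + 1) * q ^ (k * (k + 1) / 2) / (1 - q ^ k)
        * qbinom q n k
    = ∑ k ∈ Finset.Icc 1 n, q ^ k / (1 - q ^ k) := by
  induction n with
  | zero => simp
  | succ n ih =>
    have step := sum_Icc_qbinom_succ_sub (n := n) fun j hj =>
      (pow_lt_one₀ hq0.le hq1 (by simp at hj; omega)).ne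
    rw [sum_Icc_succ_top (by omega) fun k => q ^ k / (1 - q ^ k), ← ih]
    linarith

theorem andrews_uchimura (n : ℕ) (hn : 0 < n) (q : ℝ) (hq0 : 0 < q) (hq1 : q < 1) :
    ∑ k ∈ Finset.Icc 1 n, (-1 : ℝ) ^ (k + 1) * q ^ (k * (k + 1) / 2) / (1 - q ^ k)
        * qbinom q n k
    = ∑ k ∈ Finset.Icc 1 n, q ^ k / (1 - q ^ k) :=
  andrews_uchimura_general n q hq0 hq1
end

section
/- For all positive integers n, m and real q with 0 < q < 1, ∑_{k=1}^n (-1)^{k+1} q^{k(k+1)/2 + (m-1)k} / (1-q^k)^m · C_q(n,k) equals the nested sum ∑_{n ≥ k_1 ≥ k_2 ≥ ⋯ ≥ k_m ≥ 1} ∏_{j=1}^m q^{k_j}/(1-q^{k_j}). -/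
/-- The nested sum `∑_{n ≥ k₁ ≥ ⋯ ≥ k_m ≥ 1} ∏_j q^{k_j}/(1-q^{k_j})`. -/
noncomputable def nestedHarmonicQ (q : ℝ) : ℕ → ℕ → ℝ
  | _, 0 => 1
  | n, m + 1 => ∑ k ∈ Finset.Icc 1 n, q ^ k / (1 - q ^ k) * nestedHarmonicQ q k m

namespace DilcherAux
open Finset

variable {q : ℝ}

lemma aux_alg (s P x y B b : ℝ) (m : ℕ) (hu : 1 - x ≠ 0) (hw : 1 - x*y ≠ 0) :
    s * (P * x) / (1-x)^(m+1) * (b + y * (B * (1-x) / (1-x*y)))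
    = s * (P * x) / (1-x)^(m+1) * b + x*y/(1-x*y) * (s * P / (1-x)^m * B) := by
  field_simp
  ring

lemma sub_pow_ne (hq0 : 0 < q) (hq1 : q < 1) {k : ℕ} (hk : 1 ≤ k) : 1 - q ^ k ≠ 0 := by
  have : q ^ k < 1 := pow_lt_one₀ hq0.le hq1 (by omega)
  linarith

lemma qbinom_zero (q : ℝ) (n : ℕ) : qbinom q n 0 = 1 := by simp [qbinom]

lemma qbinom_of_gt {n k : ℕ} (h : n < k) : qbinom q n k = 0 := by
  simp [qbinom, Nat.not_le.mpr h]

lemma qbinom_self (hq0 : 0 < q) (hq1 : q < 1) (n : ℕ) : qbinom q n n = 1 := by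
  rw [qbinom, if_pos le_rfl]
  rw [Finset.prod_congr rfl (fun j hj => ?_), Finset.prod_const_one]
  rw [Nat.sub_self, Nat.zero_add]
  exact div_self (sub_pow_ne hq0 hq1 (Finset.mem_Icc.mp hj).1)

/-- Ratio identity: C(n+1,k)(1-q^k) = (1-q^{n+1}) C(n,k-1). -/
lemma qbinom_R (hq0 : 0 < q) (hq1 : q < 1) (n : ℕ) {k : ℕ} (hk : 1 ≤ k) (hkn : k ≤ n + 1) :
    qbinom q (n+1) k * (1 - q ^ k) = (1 - q ^ (n+1)) * qbinom q n (k-1) := by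
  obtain ⟨j, rfl⟩ : ∃ j, k = j + 1 := ⟨k - 1, by omega⟩
  have hjn : j ≤ n := by omega
  rw [qbinom, if_pos (by omega), qbinom, if_pos (by omega)]
  rw [Finset.prod_Icc_succ_top (by omega)]
  have h1 : ∀ i ∈ Finset.Icc 1 j, (1 - q ^ (n + 1 - (j+1) + i)) / (1 - q ^ i)
      = (1 - q ^ (n - j + i)) / (1 - q ^ i) := by
    intro i hi; congr 3; omega
  rw [Finset.prod_congr rfl h1]
  have h2 : n + 1 - (j+1) + (j+1) = n + 1 := by omega
  rw [h2, Nat.add_sub_cancel]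
  rw [mul_assoc, div_mul_cancel₀ _ (sub_pow_ne hq0 hq1 (by omega)), mul_comm]

/-- Ratio identity: C(n+1,k)(1-q^{n+1-k}) = (1-q^{n+1}) C(n,k). -/
lemma qbinom_T (hq0 : 0 < q) (hq1 : q < 1) (n : ℕ) {k : ℕ} (hkn : k ≤ n) :
    qbinom q (n+1) k * (1 - q ^ (n+1-k)) = (1 - q ^ (n+1)) * qbinom q n k := by
  rw [qbinom, if_pos (by omega), qbinom, if_pos hkn]
  rw [Finset.prod_div_distrib, Finset.prod_div_distrib]
  set D : ℝ := ∏ j ∈ Finset.Icc 1 k, (1 - q ^ j) with hD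
  set f : ℕ → ℝ := fun i => 1 - q ^ (n - k + 1 + i) with hf
  have hnum1 : (∏ j ∈ Finset.Icc 1 k, (1 - q ^ (n + 1 - k + j))) = ∏ i ∈ Finset.range k, f (i+1) := by
    rw [← Finset.Ico_add_one_right_eq_Icc, Finset.prod_Ico_eq_prod_range]
    apply Finset.prod_congr (by simp)
    intro i hi; simp only [hf]; congr 2; omega
  have hnum0 : (∏ j ∈ Finset.Icc 1 k, (1 - q ^ (n - k + j))) = ∏ i ∈ Finset.range k, f i := by
    rw [← Finset.Ico_add_one_right_eq_Icc, Finset.prod_Ico_eq_prod_range]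
    apply Finset.prod_congr (by simp)
    intro i hi; simp only [hf]; congr 2; omega
  rw [hnum1, hnum0]
  have key : (∏ i ∈ Finset.range k, f (i+1)) * f 0 = (∏ i ∈ Finset.range k, f i) * f k := by
    rw [← Finset.prod_range_succ', Finset.prod_range_succ]
  have hf0 : f 0 = 1 - q ^ (n + 1 - k) := by simp only [hf]; congr 2; omega
  have hfk : f k = 1 - q ^ (n + 1) := by simp only [hf]; congr 2; omega
  rw [div_mul_eq_mul_div, mul_comm (1 - q ^ (n+1)), div_mul_eq_mul_div, ← hf0, ← hfk, key]

lemma qbinom_P1 (hq0 : 0 < q) (hq1 : q < 1) (n : ℕ) {k : ℕ} (hk : 1 ≤ k) :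
    qbinom q (n+1) k = q ^ k * qbinom q n k + qbinom q n (k-1) := by
  rcases Nat.lt_or_ge (n+1) k with hgt | hle
  · rw [qbinom_of_gt hgt, qbinom_of_gt (by omega), qbinom_of_gt (by omega)]; ring
  rcases Nat.eq_or_lt_of_le hle with rfl | hlt
  · rw [qbinom_self hq0 hq1, qbinom_of_gt (by omega), Nat.add_sub_cancel, qbinom_self hq0 hq1]
    ring
  have hkn : k ≤ n := by omega
  have hR := qbinom_R hq0 hq1 n hk (by omega)
  have hT := qbinom_T hq0 hq1 n hkn
  have hpow : q ^ k * q ^ (n+1-k) = q ^ (n+1) := by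
    rw [← pow_add]; congr 1; omega
  have hne : (1 - q ^ (n+1)) ≠ 0 := sub_pow_ne hq0 hq1 (by omega)
  apply mul_right_cancel₀ hne
  linear_combination q ^ k * hT + hR + qbinom q (n+1) k * hpow

lemma qbinom_P2 (hq0 : 0 < q) (hq1 : q < 1) (n : ℕ) {k : ℕ} (hk : 1 ≤ k) :
    qbinom q (n+1) k = qbinom q n k + q ^ (n+1-k) * qbinom q n (k-1) := by
  rcases Nat.lt_or_ge (n+1) k with hgt | hle
  · rw [qbinom_of_gt hgt, qbinom_of_gt (by omega), qbinom_of_gt (by omega)]; ring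
  rcases Nat.eq_or_lt_of_le hle with rfl | hlt
  · rw [qbinom_self hq0 hq1, qbinom_of_gt (by omega), Nat.add_sub_cancel, qbinom_self hq0 hq1,
      Nat.sub_self]
    ring
  have hkn : k ≤ n := by omega
  have hR := qbinom_R hq0 hq1 n hk (by omega)
  have hT := qbinom_T hq0 hq1 n hkn
  have hpow : q ^ (n+1-k) * q ^ k = q ^ (n+1) := by
    rw [← pow_add]; congr 1; omega
  have hne : (1 - q ^ (n+1)) ≠ 0 := sub_pow_ne hq0 hq1 (by omega)
  apply mul_right_cancel₀ hne
  linear_combination hT + q ^ (n+1-k) * hR + qbinom q (n+1) k * hpow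

lemma choose_succ_two (k : ℕ) : (k+1).choose 2 = k.choose 2 + k := by
  rw [Nat.choose_succ_succ]
  simp [Nat.choose_one_right, Nat.add_comm]

/-- The m = 0 case: the q-binomial theorem at x = -1. -/
lemma base (hq0 : 0 < q) (hq1 : q < 1) (n : ℕ) :
    ∑ k ∈ Finset.Icc 1 (n+1), (-1:ℝ) ^ (k+1) * q ^ (k.choose 2) * qbinom q (n+1) k = 1 := by
  have hsplit : ∀ k ∈ Finset.Icc 1 (n+1),
      (-1:ℝ) ^ (k+1) * q ^ (k.choose 2) * qbinom q (n+1) k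
      = (-1:ℝ) ^ (k+1) * q ^ ((k+1).choose 2) * qbinom q n k
        + (-1:ℝ) ^ (k+1) * q ^ (k.choose 2) * qbinom q n (k-1) := by
    intro k hk
    obtain ⟨hk1, hk2⟩ := Finset.mem_Icc.mp hk
    rw [qbinom_P1 hq0 hq1 n hk1, choose_succ_two, pow_add]
    ring
  rw [Finset.sum_congr rfl hsplit, Finset.sum_add_distrib]
  have h1 : ∑ k ∈ Finset.Icc 1 (n+1), (-1:ℝ) ^ (k+1) * q ^ ((k+1).choose 2) * qbinom q n k
      = ∑ i ∈ Finset.range n, (-1:ℝ) ^ i * q ^ ((i+2).choose 2) * qbinom q n (i+1) := by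
    rw [Finset.sum_Icc_succ_top (by omega), qbinom_of_gt (by omega), mul_zero, add_zero]
    rw [← Finset.Ico_add_one_right_eq_Icc, Finset.sum_Ico_eq_sum_range]
    apply Finset.sum_congr (by simp)
    intro i hi
    have : (-1:ℝ) ^ (1 + i + 1) = (-1:ℝ) ^ i := by
      rw [show 1 + i + 1 = i + 2 by omega, pow_add]; ring
    rw [this, show 1 + i + 1 = i + 2 by omega, show 1 + i = i + 1 by omega]
  have h2 : ∑ k ∈ Finset.Icc 1 (n+1), (-1:ℝ) ^ (k+1) * q ^ (k.choose 2) * qbinom q n (k-1)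
      = 1 + ∑ i ∈ Finset.range n, (-1:ℝ) ^ (i+1) * q ^ ((i+2).choose 2) * qbinom q n (i+1) := by
    rw [← Finset.Ico_add_one_right_eq_Icc, Finset.sum_Ico_eq_sum_range]
    have : ∀ i ∈ Finset.range (n + 1 + 1 - 1),
        (-1:ℝ) ^ (1 + i + 1) * q ^ ((1+i).choose 2) * qbinom q n (1 + i - 1)
        = (-1:ℝ) ^ i * q ^ ((i+1).choose 2) * qbinom q n i := by
      intro i hi
      have h3 : (-1:ℝ) ^ (1 + i + 1) = (-1:ℝ) ^ i := by
        rw [show 1 + i + 1 = i + 2 by omega, pow_add]; ring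
      rw [h3, show 1 + i = i + 1 by omega, Nat.add_sub_cancel]
    rw [Finset.sum_congr rfl this]
    have hn1 : n + 1 + 1 - 1 = n + 1 := by omega
    rw [hn1, Finset.sum_range_succ']
    norm_num [qbinom_zero]
    exact add_comm _ _
  rw [h1, h2]
  have hz : (∑ i ∈ Finset.range n, (-1:ℝ) ^ i * q ^ ((i+2).choose 2) * qbinom q n (i+1))
      + ∑ i ∈ Finset.range n, (-1:ℝ) ^ (i+1) * q ^ ((i+2).choose 2) * qbinom q n (i+1) = 0 := by
    rw [← Finset.sum_add_distrib]
    apply Finset.sum_eq_zero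
    intro i hi
    rw [pow_succ]
    ring
  linarith [hz]


/-- Key recursion step in n. -/
lemma step (hq0 : 0 < q) (hq1 : q < 1) (m n : ℕ) :
    (∑ k ∈ Finset.Icc 1 (n+1),
        (-1:ℝ) ^ (k+1) * q ^ (k.choose 2 + (m+1)*k) / (1 - q ^ k) ^ (m+1) * qbinom q (n+1) k)
    = (∑ k ∈ Finset.Icc 1 n,
        (-1:ℝ) ^ (k+1) * q ^ (k.choose 2 + (m+1)*k) / (1 - q ^ k) ^ (m+1) * qbinom q n k)
      + q ^ (n+1) / (1 - q ^ (n+1)) *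
        ∑ k ∈ Finset.Icc 1 (n+1),
          (-1:ℝ) ^ (k+1) * q ^ (k.choose 2 + m*k) / (1 - q ^ k) ^ m * qbinom q (n+1) k := by
  have hnne : (1 - q ^ (n+1)) ≠ 0 := sub_pow_ne hq0 hq1 (by omega)
  have key : ∀ k ∈ Finset.Icc 1 (n+1),
      (-1:ℝ) ^ (k+1) * q ^ (k.choose 2 + (m+1)*k) / (1 - q ^ k) ^ (m+1) * qbinom q (n+1) k
      = (-1:ℝ) ^ (k+1) * q ^ (k.choose 2 + (m+1)*k) / (1 - q ^ k) ^ (m+1) * qbinom q n k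
        + q ^ (n+1) / (1 - q ^ (n+1)) *
          ((-1:ℝ) ^ (k+1) * q ^ (k.choose 2 + m*k) / (1 - q ^ k) ^ m * qbinom q (n+1) k) := by
    intro k hk
    obtain ⟨hk1, hk2⟩ := Finset.mem_Icc.mp hk
    have hkne : (1 - q ^ k) ≠ 0 := sub_pow_ne hq0 hq1 hk1
    have hR := qbinom_R hq0 hq1 n hk1 hk2
    have hb : qbinom q n (k-1) = qbinom q (n+1) k * (1 - q ^ k) / (1 - q ^ (n+1)) := by
      field_simp
      linarith [hR]
    have hP2 := qbinom_P2 hq0 hq1 n hk1 (q := q)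
    have e1 : q ^ (k.choose 2 + (m+1)*k) = q ^ (k.choose 2 + m*k) * q ^ k := by
      rw [← pow_add]; congr 1; ring
    have e2 : q ^ k * q ^ (n+1-k) = q ^ (n+1) := by
      rw [← pow_add]; congr 1; omega
    nth_rewrite 1 [hP2]
    rw [hb, e1, ← e2]
    have hnne' : 1 - q ^ k * q ^ (n+1-k) ≠ 0 := by rw [e2]; exact hnne
    exact aux_alg ((-1:ℝ)^(k+1)) (q ^ (k.choose 2 + m*k)) (q^k) (q^(n+1-k))
      (qbinom q (n+1) k) (qbinom q n k) m hkne hnne'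
  rw [Finset.sum_congr rfl key, Finset.sum_add_distrib, Finset.mul_sum]
  rw [Finset.sum_Icc_succ_top (a := 1) (b := n) (by omega), qbinom_of_gt (by omega),
    mul_zero, add_zero]

/-- Main identity. -/
lemma main (hq0 : 0 < q) (hq1 : q < 1) :
    ∀ m n : ℕ, 0 < n →
      (∑ k ∈ Finset.Icc 1 n,
          (-1:ℝ) ^ (k+1) * q ^ (k.choose 2 + m*k) / (1 - q ^ k) ^ m * qbinom q n k)
      = nestedHarmonicQ q n m := by
  intro m
  induction m with
  | zero =>
    intro n hn
    obtain ⟨n', rfl⟩ : ∃ n', n = n' + 1 := ⟨n - 1, by omega⟩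
    have : nestedHarmonicQ q (n'+1) 0 = 1 := rfl
    rw [this]
    refine Eq.trans (Finset.sum_congr rfl fun k hk => ?_) (base hq0 hq1 n')
    simp only [Nat.zero_mul, Nat.add_zero, pow_zero, div_one]
  | succ m ih =>
    have haux : ∀ n : ℕ,
        (∑ k ∈ Finset.Icc 1 n,
          (-1:ℝ) ^ (k+1) * q ^ (k.choose 2 + (m+1)*k) / (1 - q ^ k) ^ (m+1) * qbinom q n k)
        = nestedHarmonicQ q n (m+1) := by
      intro n
      induction n with
      | zero => simp [nestedHarmonicQ]
      | succ n ihn =>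
        rw [step hq0 hq1 m n, ihn, ih (n+1) (by omega)]
        show _ = ∑ k ∈ Finset.Icc 1 (n+1), q ^ k / (1 - q ^ k) * nestedHarmonicQ q k m
        rw [Finset.sum_Icc_succ_top (by omega)]
        show _ = nestedHarmonicQ q n (m+1) + _
        ring
    exact fun n _ => haux n

end DilcherAux

theorem dilcher (n m : ℕ) (hn : 0 < n) (hm : 0 < m) (q : ℝ) (hq0 : 0 < q) (hq1 : q < 1) :
    ∑ k ∈ Finset.Icc 1 n,
        (-1 : ℝ) ^ (k + 1) * q ^ (k * (k + 1) / 2 + (m - 1) * k) / (1 - q ^ k) ^ m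
          * qbinom q n k
    = nestedHarmonicQ q n m := by
  obtain ⟨m', rfl⟩ : ∃ m', m = m' + 1 := ⟨m - 1, by omega⟩
  rw [← DilcherAux.main hq0 hq1 (m'+1) n hn]
  apply Finset.sum_congr rfl
  intro k hk
  have he : k * (k + 1) / 2 + (m' + 1 - 1) * k = k.choose 2 + (m'+1) * k := by
    have h2 : k * (k + 1) / 2 = k.choose 2 + k := by
      have ha := Nat.choose_two_right (k+1)
      have hb := DilcherAux.choose_succ_two k
      have hc : (k+1) * ((k+1) - 1) = k * (k+1) := by
        rw [Nat.add_sub_cancel]; ring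
      omega
    rw [Nat.add_sub_cancel, h2, Nat.succ_mul]
    ring
  rw [he]
end

section
/- Let q be real with 0 < q < 1 and define A_n[s_1,…,s_m] = ∑_{n ≥ k_1 ≥ ⋯ ≥ k_m ≥ 1} (-1)^{k_1+1} q^{k_1(k_1+1)/2} C_q(n,k_1) ∏_{j=1}^m q^{(s_j-1)k_j}[k_j]_q^{-s_j} for non-negative integers s_j. Then for all positive integers n, m, s_1,…,s_m: A_n[s_1,s_2,…,s_m] = ∑_{r=1}^n q^r [r]_q^{-1} A_r[s_1 - 1, s_2, …, s_m]. -/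
/-- The `q`-analog of a natural number: `[k]_q = (1-q^k)/(1-q)`. -/
noncomputable def qnum (q : ℝ) (k : ℕ) : ℝ := (1 - q ^ k) / (1 - q)

/-- `Zn q n [s₁,…,s_m] = ∑_{n ≥ k₁ ≥ ⋯ ≥ k_m ≥ 1} ∏_j q^{k_j} [k_j]_q^{-s_j}`. -/
noncomputable def Zn (q : ℝ) : ℕ → List ℕ → ℝ
  | _, [] => 1
  | n, s :: t => ∑ k ∈ Finset.Icc 1 n, q ^ k / (qnum q k) ^ s * Zn q k t

/-- `Wn q n [s₁,…,s_m] = ∑_{n ≥ k₁ ≥ ⋯ ≥ k_m ≥ 1} ∏_j q^{(s_j-1) k_j} [k_j]_q^{-s_j}`. -/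
noncomputable def Wn (q : ℝ) : ℕ → List ℕ → ℝ
  | _, [] => 1
  | n, s :: t => ∑ k ∈ Finset.Icc 1 n,
      q ^ (((s : ℤ) - 1) * (k : ℤ)) / (qnum q k) ^ s * Wn q k t

/-- `An q n [s₁,…,s_m] = ∑_{n ≥ k₁ ≥ ⋯ ≥ k_m ≥ 1} (-1)^{k₁+1} q^{k₁(k₁+1)/2} C_q(n,k₁)
    ∏_j q^{(s_j-1) k_j} [k_j]_q^{-s_j}`. -/
noncomputable def An (q : ℝ) (n : ℕ) : List ℕ → ℝ
  | [] => 1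
  | s :: t => ∑ k ∈ Finset.Icc 1 n,
      (-1 : ℝ) ^ (k + 1) * q ^ (k * (k + 1) / 2) * qbinom q n k *
        (q ^ (((s : ℤ) - 1) * (k : ℤ)) / (qnum q k) ^ s) * Wn q k t
/- Expanding the right-hand side and exchanging the sums over `r` and `k₁` reduces the
recurrence to the `q`-hockey-stick identity `∑_{r=k}^n q^r [r]_q⁻¹ C_q(r,k) = q^k [k]_q⁻¹ C_q(n,k)`,
after which `q^k [k]_q⁻¹` turns the weight of `s₁ - 1` into that of `s₁`. The identity telescopes,
each step being a rearrangement of `q`-factorials. -/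

open Finset

noncomputable def qPochhammer (q : ℝ) (n : ℕ) : ℝ := ∏ j ∈ Icc 1 n, (1 - q ^ j)

lemma qPochhammer_succ (q : ℝ) (n : ℕ) :
    qPochhammer q (n + 1) = qPochhammer q n * (1 - q ^ (n + 1)) :=
  prod_Icc_succ_top (by omega) _

lemma qPochhammer_add (q : ℝ) (a b : ℕ) :
    qPochhammer q (a + b) = qPochhammer q a * ∏ j ∈ Icc 1 b, (1 - q ^ (a + j)) := by
  induction b with
  | zero => simp
  | succ b ih =>
    rw [← add_assoc, qPochhammer_succ, ih, prod_Icc_succ_top (by omega), mul_assoc, add_assoc]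

section NotRootOfUnity

variable {q : ℝ} (hq : ∀ j ≠ 0, q ^ j ≠ 1)
include hq

lemma one_sub_pow_ne_zero {j : ℕ} (hj : j ≠ 0) : 1 - q ^ j ≠ 0 :=
  sub_ne_zero.mpr (hq j hj).symm

lemma qPochhammer_ne_zero (n : ℕ) : qPochhammer q n ≠ 0 :=
  prod_ne_zero_iff.mpr fun j hj => one_sub_pow_ne_zero hq (by simp only [mem_Icc] at hj; omega)

lemma qbinom_add_eq (d k : ℕ) :
    qbinom q (d + k) k = qPochhammer q (d + k) / (qPochhammer q k * qPochhammer q d) := by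
  rw [qbinom, if_pos (by omega), prod_div_distrib, Nat.add_sub_cancel, qPochhammer_add q d k,
    mul_comm (qPochhammer q k), mul_div_mul_left _ _ (qPochhammer_ne_zero hq d)]
  rfl

lemma pow_div_qnum_mul_qbinom_succ {k : ℕ} (hk : k ≠ 0) (d : ℕ) :
    q ^ (d + k + 1) / qnum q (d + k + 1) * qbinom q (d + k + 1) k
      = q ^ k / qnum q k * (qbinom q (d + k + 1) k - qbinom q (d + k) k) := by
  rw [show d + k + 1 = (d + 1) + k by omega, qbinom_add_eq hq, qbinom_add_eq hq,
    show (d + 1) + k = (d + k) + 1 by omega, qPochhammer_succ, qPochhammer_succ, qnum, qnum]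
  have := one_sub_pow_ne_zero hq hk
  have := one_sub_pow_ne_zero hq one_ne_zero
  have := one_sub_pow_ne_zero hq (j := d + k + 1) (by omega)
  have := one_sub_pow_ne_zero hq (j := d + 1) (by omega)
  have := qPochhammer_ne_zero hq k
  have := qPochhammer_ne_zero hq d
  have := qPochhammer_ne_zero hq (d + k)
  field_simp
  ring

lemma sum_Icc_pow_div_qnum_mul_qbinom {k n : ℕ} (hk : k ≠ 0) (hkn : k ≤ n) :
    ∑ r ∈ Icc k n, q ^ r / qnum q r * qbinom q r k = q ^ k / qnum q k * qbinom q n k := by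
  obtain ⟨d, rfl⟩ := Nat.exists_eq_add_of_le' hkn
  induction d with
  | zero => simp
  | succ d ih =>
    rw [show d + 1 + k = d + k + 1 by omega, sum_Icc_succ_top (by omega), ih (by omega),
      pow_div_qnum_mul_qbinom_succ hq hk]
    ring

end NotRootOfUnity

lemma pow_div_qnum_mul_weight_pred {q : ℝ} (hq : q ≠ 0) {s : ℕ} (hs : 0 < s) (k : ℕ) :
    q ^ k / qnum q k * (q ^ ((((s - 1 : ℕ) : ℤ) - 1) * (k : ℤ)) / qnum q k ^ (s - 1))
      = q ^ (((s : ℤ) - 1) * (k : ℤ)) / qnum q k ^ s := by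
  have hpow : q ^ k * q ^ ((((s - 1 : ℕ) : ℤ) - 1) * (k : ℤ)) = q ^ (((s : ℤ) - 1) * (k : ℤ)) := by
    rw [← zpow_natCast, ← zpow_add₀ hq, Nat.cast_pred hs]
    ring_nf
  rw [← hpow, ← Nat.sub_add_cancel hs, pow_succ, Nat.add_sub_cancel]
  ring

theorem An_recurrence_general (q : ℝ) (hq0 : 0 < q) (hq1 : q < 1) (n : ℕ)
    (s₁ : ℕ) (hs₁ : 0 < s₁) (t : List ℕ) :
    An q n (s₁ :: t) = ∑ r ∈ Finset.Icc 1 n, q ^ r / qnum q r * An q r ((s₁ - 1) :: t) := by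
  simp only [An, mul_sum]
  rw [sum_comm' (s' := fun k => Icc k n) (t' := Icc 1 n)
    (fun r k => by simp only [mem_Icc]; omega)]
  refine sum_congr rfl fun k hk => ?_
  obtain ⟨hk1, hkn⟩ := mem_Icc.mp hk
  have hsum := sum_Icc_pow_div_qnum_mul_qbinom
    (fun _ hj => (pow_lt_one₀ hq0.le hq1 hj).ne) (by omega : k ≠ 0) hkn
  have hweight := pow_div_qnum_mul_weight_pred hq0.ne' hs₁ k
  calc _ = (-1 : ℝ) ^ (k + 1) * q ^ (k * (k + 1) / 2) * (q ^ k / qnum q k * qbinom q n k) *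
        (q ^ ((((s₁ - 1 : ℕ) : ℤ) - 1) * (k : ℤ)) / qnum q k ^ (s₁ - 1)) * Wn q k t := by
        rw [← hweight]; ring
    _ = _ := by
        rw [← hsum, mul_sum, sum_mul, sum_mul]
        exact sum_congr rfl fun r _ => by ring

/-- Proposition 1: recurrence for `A_n`. -/
theorem An_recurrence (q : ℝ) (hq0 : 0 < q) (hq1 : q < 1) (n : ℕ) (hn : 0 < n)
    (s₁ : ℕ) (hs₁ : 0 < s₁) (t : List ℕ) (ht : ∀ s ∈ t, 0 < s) :
    An q n (s₁ :: t) = ∑ r ∈ Finset.Icc 1 n, q ^ r / qnum q r * An q r ((s₁ - 1) :: t) :=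
  An_recurrence_general q hq0 hq1 n s₁ hs₁ t
end
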